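/- Method of acyclic models (uniqueness up to homotopy): In the setting of the acyclic models theorem, if in addition H_k(D^{kj}_*) = 0 for all k, j, then any two chain maps f, f′: F_* → G_* satisfying f(x_{kj}), f′(x_{kj}) ∈ D^{kj}_* are chain homotopic via a homotopy h with h(x_{kj}) ∈ D^{kj}_{k+1}. -/

import Mathlib

/-!
The homotopy is built degree by degree. Given `h` up to degree `n`, the element
`y_j = f(x_j) - f'(x_j) - h(∂x_j)` for a basis element `x_j` of degree `n + 1` lies in
`D^j_{n+1}` by the nesting condition, and is a cycle because `∂h + h∂ = f - f'` in degree `n`.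
Acyclicity of `D^j` in degree `n + 1` gives `z_j ∈ D^j_{n+2}` with `∂z_j = y_j`, and freeness of
`F_{n+1}` lets us set `h(x_j) = z_j`.
-/

theorem exists_seq_of_exists_succ {α : ℕ → Type*} (P : ∀ n, α n → Prop)
    (Q : ∀ n, α n → α (n + 1) → Prop) {a₀ : α 0} (ha₀ : P 0 a₀)
    (hsucc : ∀ n a, P n a → ∃ b, P (n + 1) b ∧ Q n a b) :
    ∃ s : ∀ n, α n, s 0 = a₀ ∧ ∀ n, P n (s n) ∧ Q n (s n) (s (n + 1)) := by
  choose next hnext using hsucc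
  let t : ∀ n, {a // P n a} :=
    fun n => Nat.rec ⟨a₀, ha₀⟩ (fun n a => ⟨next n a a.2, (hnext n a a.2).1⟩) n
  exact ⟨fun n => (t n).1, rfl, fun n => ⟨(t n).2, (hnext n _ (t n).2).2⟩⟩

namespace Finsupp

variable {R M N ι : Type*} [Semiring R] [AddCommMonoid M] [Module R M] [AddCommMonoid N]
  [Module R N]

theorem map_mem_of_forall_mem_support (g : (ι →₀ R) →ₗ[R] M) (p : Submodule R M)
    {x : ι →₀ R} (hx : ∀ l ∈ x.support, g (single l 1) ∈ p) : g x ∈ p := by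
  have hspan : Submodule.span R ((fun l => single l (1 : R)) '' x.support) ≤ p.comap g :=
    Submodule.span_le.mpr <| by rintro _ ⟨l, hl, rfl⟩; exact hx l hl
  exact hspan (supported_eq_span_single R _ ▸ mem_supported_support R x)

theorem exists_lift_single_mem (d : M →ₗ[R] N) (φ : (ι →₀ R) →ₗ[R] N) (Z : ι → Submodule R M)
    (hφ : ∀ j, ∃ z ∈ Z j, d z = φ (single j 1)) :
    ∃ ψ : (ι →₀ R) →ₗ[R] M, (∀ j, ψ (single j 1) ∈ Z j) ∧ d ∘ₗ ψ = φ := by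
  choose z hzZ hdz using hφ
  refine ⟨linearCombination R z, fun j => by simpa using hzZ j, ?_⟩
  refine Finsupp.basisSingleOne.ext fun j => ?_
  simpa using hdz j

end Finsupp

section AcyclicModels

open Finsupp

variable {R : Type*} [Ring R] {ι : ℕ → Type*} {G : ℕ → Type*} [∀ n, AddCommGroup (G n)]
  [∀ n, Module R (G n)] {dF : ∀ n, (ι (n + 1) →₀ R) →ₗ[R] (ι n →₀ R)}
  {dG : ∀ n, G (n + 1) →ₗ[R] G n} {D : ∀ k, ι k → ∀ n, Submodule R (G n)}
  {f f' : ∀ n, (ι n →₀ R) →ₗ[R] G n}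

theorem exists_homotopy_succ
    (hnest : ∀ k (j : ι (k + 1)) (l : ι k),
      (dF k (single j 1)) l ≠ 0 → ∀ n, D k l n ≤ D (k + 1) j n)
    (hacyc : ∀ k (j : ι (k + 1)), ∀ y ∈ D (k + 1) j (k + 1), dG k y = 0 →
      ∃ z ∈ D (k + 1) j (k + 2), dG (k + 1) z = y)
    (hf : ∀ n (x : ι (n + 1) →₀ R), dG n (f (n + 1) x) = f n (dF n x))
    (hf' : ∀ n (x : ι (n + 1) →₀ R), dG n (f' (n + 1) x) = f' n (dF n x))
    (hfD : ∀ n (j : ι n), f n (single j 1) ∈ D n j n)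
    (hf'D : ∀ n (j : ι n), f' n (single j 1) ∈ D n j n)
    {n : ℕ} (h : (ι n →₀ R) →ₗ[R] G (n + 1)) (hhD : ∀ j, h (single j 1) ∈ D n j (n + 1))
    (hh : dG n ∘ₗ h ∘ₗ dF n = (f n - f' n) ∘ₗ dF n) :
    ∃ h' : (ι (n + 1) →₀ R) →ₗ[R] G (n + 2), (∀ j, h' (single j 1) ∈ D (n + 1) j (n + 2)) ∧
      dG (n + 1) ∘ₗ h' + h ∘ₗ dF n = f (n + 1) - f' (n + 1) := by
  obtain ⟨h', hh'D, hh'⟩ := exists_lift_single_mem (dG (n + 1))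
    (f (n + 1) - f' (n + 1) - h ∘ₗ dF n) (fun j => D (n + 1) j (n + 2)) fun j => by
      have hdF_mem : h (dF n (single j 1)) ∈ D (n + 1) j (n + 1) :=
        map_mem_of_forall_mem_support h _ fun l hl =>
          hnest n j l (mem_support_iff.mp hl) (n + 1) (hhD l)
      have hcycle : dG n (f (n + 1) (single j 1) - f' (n + 1) (single j 1)
          - h (dF n (single j 1))) = 0 := by
        have := LinearMap.congr_fun hh (single j 1)
        simp only [LinearMap.comp_apply, LinearMap.sub_apply] at this
        rw [map_sub, map_sub, hf, hf', this, sub_self]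
      exact hacyc n j _ (sub_mem (sub_mem (hfD _ j) (hf'D _ j)) hdF_mem) hcycle
  exact ⟨h', hh'D, by rw [hh', sub_add_cancel]⟩

end AcyclicModels

theorem stmt_11_general (R : Type*) [Ring R] (ι : ℕ → Type*)
    (G : ℕ → Type*) [∀ n, AddCommGroup (G n)] [∀ n, Module R (G n)]
    (dF : ∀ n, (ι (n + 1) →₀ R) →ₗ[R] (ι n →₀ R))
    (hdF : ∀ n (x : ι (n + 2) →₀ R), dF n (dF (n + 1) x) = 0)
    (dG : ∀ n, G (n + 1) →ₗ[R] G n)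
    (D : ∀ k, ι k → ∀ n, Submodule R (G n))
    (hnest : ∀ k (j : ι (k + 1)) (l : ι k),
      (dF k (Finsupp.single j 1)) l ≠ 0 → ∀ n, D k l n ≤ D (k + 1) j n)
    (hacyc0' : ∀ j : ι 0, ∀ y ∈ D 0 j 0, ∃ z ∈ D 0 j 1, dG 0 z = y)
    (hacyc' : ∀ k (j : ι (k + 1)), ∀ y ∈ D (k + 1) j (k + 1), dG k y = 0 →
      ∃ z ∈ D (k + 1) j (k + 2), dG (k + 1) z = y)
    (f f' : ∀ n, (ι n →₀ R) →ₗ[R] G n)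
    (hf : ∀ n (x : ι (n + 1) →₀ R), dG n (f (n + 1) x) = f n (dF n x))
    (hf' : ∀ n (x : ι (n + 1) →₀ R), dG n (f' (n + 1) x) = f' n (dF n x))
    (hfD : ∀ n (j : ι n), f n (Finsupp.single j 1) ∈ D n j n)
    (hf'D : ∀ n (j : ι n), f' n (Finsupp.single j 1) ∈ D n j n) :
    ∃ h : ∀ n, (ι n →₀ R) →ₗ[R] G (n + 1),
      (∀ n (j : ι n), h n (Finsupp.single j 1) ∈ D n j (n + 1)) ∧
      (∀ x : ι 0 →₀ R, dG 0 (h 0 x) = f 0 x - f' 0 x) ∧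
      (∀ n (x : ι (n + 1) →₀ R),
        dG (n + 1) (h (n + 1) x) + h n (dF n x) = f (n + 1) x - f' (n + 1) x) := by
  obtain ⟨h₀, hh₀D, hh₀⟩ := Finsupp.exists_lift_single_mem (dG 0) (f 0 - f' 0)
    (fun j => D 0 j 1) fun j => hacyc0' j _ (sub_mem (hfD 0 j) (hf'D 0 j))
  obtain ⟨h, rfl, hh⟩ := exists_seq_of_exists_succ
    (fun n (h : (ι n →₀ R) →ₗ[R] G (n + 1)) => (∀ j, h (Finsupp.single j 1) ∈ D n j (n + 1)) ∧
      dG n ∘ₗ h ∘ₗ dF n = (f n - f' n) ∘ₗ dF n)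
    (fun n h h' => dG (n + 1) ∘ₗ h' + h ∘ₗ dF n = f (n + 1) - f' (n + 1))
    ⟨hh₀D, by rw [← LinearMap.comp_assoc, hh₀]⟩
    fun n h ⟨hhD, hh⟩ => by
      obtain ⟨h', hh'D, hh'⟩ := exists_homotopy_succ hnest hacyc' hf hf' hfD hf'D h hhD hh
      -- `∂ ∘ ∂ = 0` in `F` kills the `h ∘ ∂` term after precomposing with `∂`.
      refine ⟨h', ⟨hh'D, LinearMap.ext fun x => ?_⟩, hh'⟩
      simpa [hdF] using LinearMap.congr_fun hh' (dF (n + 1) x)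
  refine ⟨h, fun n => (hh n).1.1, fun x => LinearMap.congr_fun hh₀ x, fun n x => ?_⟩
  simpa using LinearMap.congr_fun (hh n).2 x

/-- Method of acyclic models (uniqueness up to homotopy): with the data of the acyclic
models theorem and the additional acyclicity `H_k(D^{kj}) = 0`, any two chain maps
`f, f' : F → G` carrying each basis element `x_{kj}` into `D^{kj}` are chain homotopic
via a homotopy `h` with `h(x_{kj}) ∈ D^{kj}_{k+1}`. -/
theorem stmt_11 (R : Type*) [Ring R] (ι : ℕ → Type*)
    (G : ℕ → Type*) [∀ n, AddCommGroup (G n)] [∀ n, Module R (G n)]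
    (dF : ∀ n, (ι (n + 1) →₀ R) →ₗ[R] (ι n →₀ R))
    (hdF : ∀ n (x : ι (n + 2) →₀ R), dF n (dF (n + 1) x) = 0)
    (dG : ∀ n, G (n + 1) →ₗ[R] G n)
    (hdG : ∀ n (x : G (n + 2)), dG n (dG (n + 1) x) = 0)
    (D : ∀ k, ι k → ∀ n, Submodule R (G n))
    (hDsub : ∀ k (j : ι k) (n : ℕ), ∀ x ∈ D k j (n + 1), dG n x ∈ D k j n)
    (hnest : ∀ k (j : ι (k + 1)) (l : ι k),
      (dF k (Finsupp.single j 1)) l ≠ 0 → ∀ n, D k l n ≤ D (k + 1) j n)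
    (hne : ∀ j : ι 0, ((D 0 j 0 : Submodule R (G 0)) : Set (G 0)).Nonempty)
    (hacyc0 : ∀ j : ι 1, ∀ y ∈ D 1 j 0, ∃ z ∈ D 1 j 1, dG 0 z = y)
    (hacyc : ∀ k (j : ι (k + 2)), ∀ y ∈ D (k + 2) j (k + 1), dG k y = 0 →
      ∃ z ∈ D (k + 2) j (k + 2), dG (k + 1) z = y)
    (hacyc0' : ∀ j : ι 0, ∀ y ∈ D 0 j 0, ∃ z ∈ D 0 j 1, dG 0 z = y)
    (hacyc' : ∀ k (j : ι (k + 1)), ∀ y ∈ D (k + 1) j (k + 1), dG k y = 0 →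
      ∃ z ∈ D (k + 1) j (k + 2), dG (k + 1) z = y)
    (f f' : ∀ n, (ι n →₀ R) →ₗ[R] G n)
    (hf : ∀ n (x : ι (n + 1) →₀ R), dG n (f (n + 1) x) = f n (dF n x))
    (hf' : ∀ n (x : ι (n + 1) →₀ R), dG n (f' (n + 1) x) = f' n (dF n x))
    (hfD : ∀ n (j : ι n), f n (Finsupp.single j 1) ∈ D n j n)
    (hf'D : ∀ n (j : ι n), f' n (Finsupp.single j 1) ∈ D n j n) :
    ∃ h : ∀ n, (ι n →₀ R) →ₗ[R] G (n + 1),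
      (∀ n (j : ι n), h n (Finsupp.single j 1) ∈ D n j (n + 1)) ∧
      (∀ x : ι 0 →₀ R, dG 0 (h 0 x) = f 0 x - f' 0 x) ∧
      (∀ n (x : ι (n + 1) →₀ R),
        dG (n + 1) (h (n + 1) x) + h n (dF n x) = f (n + 1) x - f' (n + 1) x) :=
  stmt_11_general R ι G dF hdF dG D hnest hacyc0' hacyc' f f' hf hf' hfD hf'D
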